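/- For all α ∈ [0,1] and all positive semidefinite matrices Σ₁, Σ₂, setting χ = αΣ₁ + (1−α)Σ₂, one has Fᵀ R̃(χ)⁻¹ F ⪯ Fᵀ R̃(αΣ₁)⁻¹ F + Fᵀ R̃((1−α)Σ₂)⁻¹ F. -/

import Mathlib

/-! `R̃` is monotone in `Σ`, so `R̃(αΣ₁) ⪯ R̃(χ)` and, inversion being antitone on positive definite
matrices, `Fᵀ R̃(χ)⁻¹ F ⪯ Fᵀ R̃(αΣ₁)⁻¹ F`; the remaining term `Fᵀ R̃((1−α)Σ₂)⁻¹ F` is positive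
semidefinite. -/

open Matrix BigOperators

noncomputable section

/-- `R̃(Σ) = C (A Σ Aᵀ + Q) Cᵀ + R`. -/
def Rt {ny nz : ℕ} (A Q : Matrix (Fin ny) (Fin ny) ℝ)
    (C : Matrix (Fin nz) (Fin ny) ℝ) (R : Matrix (Fin nz) (Fin nz) ℝ)
    (S : Matrix (Fin ny) (Fin ny) ℝ) : Matrix (Fin nz) (Fin nz) ℝ :=
  C * (A * S * Aᵀ + Q) * Cᵀ + R

/-- Optimal unknown-input filter gain `M(Σ)`. -/
def Mg {ny nz nd : ℕ} (A Q : Matrix (Fin ny) (Fin ny) ℝ) (G : Matrix (Fin ny) (Fin nd) ℝ)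
    (C : Matrix (Fin nz) (Fin ny) ℝ) (R : Matrix (Fin nz) (Fin nz) ℝ)
    (S : Matrix (Fin ny) (Fin ny) ℝ) : Matrix (Fin nd) (Fin nz) ℝ :=
  ((C * G)ᵀ * (Rt A Q C R S)⁻¹ * (C * G))⁻¹ * (C * G)ᵀ * (Rt A Q C R S)⁻¹

/-- Optimal state filter gain `K(Σ)`. -/
def Kg {ny nz : ℕ} (A Q : Matrix (Fin ny) (Fin ny) ℝ)
    (C : Matrix (Fin nz) (Fin ny) ℝ) (R : Matrix (Fin nz) (Fin nz) ℝ)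
    (S : Matrix (Fin ny) (Fin ny) ℝ) : Matrix (Fin ny) (Fin nz) ℝ :=
  (A * S * Aᵀ + Q) * Cᵀ * (Rt A Q C R S)⁻¹

/-- Closed loop matrix `Ã(Σ)`. -/
def Atil {ny nz nd : ℕ} (A Q : Matrix (Fin ny) (Fin ny) ℝ) (G : Matrix (Fin ny) (Fin nd) ℝ)
    (C : Matrix (Fin nz) (Fin ny) ℝ) (R : Matrix (Fin nz) (Fin nz) ℝ)
    (S : Matrix (Fin ny) (Fin ny) ℝ) : Matrix (Fin ny) (Fin ny) ℝ :=
  (1 - Kg A Q C R S * C) * (1 - G * Mg A Q G C R S * C) * A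

/-- `F̃(Σ)`. -/
def Ftil {ny nz nd : ℕ} (A Q : Matrix (Fin ny) (Fin ny) ℝ) (G : Matrix (Fin ny) (Fin nd) ℝ)
    (C : Matrix (Fin nz) (Fin ny) ℝ) (R : Matrix (Fin nz) (Fin nz) ℝ)
    (S : Matrix (Fin ny) (Fin ny) ℝ) : Matrix (Fin ny) (Fin ny) ℝ :=
  -((1 - Kg A Q C R S * C) * (1 - G * Mg A Q G C R S * C))

/-- `W̃(Σ)`. -/
def Wtil {ny nz nd : ℕ} (A Q : Matrix (Fin ny) (Fin ny) ℝ) (G : Matrix (Fin ny) (Fin nd) ℝ)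
    (C : Matrix (Fin nz) (Fin ny) ℝ) (R : Matrix (Fin nz) (Fin nz) ℝ)
    (S : Matrix (Fin ny) (Fin ny) ℝ) : Matrix (Fin ny) (Fin nz) ℝ :=
  G * Mg A Q G C R S - Kg A Q C R S * C * G * Mg A Q G C R S + Kg A Q C R S

/-- The state error covariance update map `ρ(Σ)`. -/
def rho {ny nz nd : ℕ} (A Q : Matrix (Fin ny) (Fin ny) ℝ) (G : Matrix (Fin ny) (Fin nd) ℝ)
    (C : Matrix (Fin nz) (Fin ny) ℝ) (R : Matrix (Fin nz) (Fin nz) ℝ)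
    (S : Matrix (Fin ny) (Fin ny) ℝ) : Matrix (Fin ny) (Fin ny) ℝ :=
  Atil A Q G C R S * S * (Atil A Q G C R S)ᵀ
    + Ftil A Q G C R S * Q * (Ftil A Q G C R S)ᵀ
    + Wtil A Q G C R S * R * (Wtil A Q G C R S)ᵀ

/-- The unknown-input error covariance update map `ρᵈ(Σ)`. -/
def rhod {ny nz nd : ℕ} (A Q : Matrix (Fin ny) (Fin ny) ℝ) (G : Matrix (Fin ny) (Fin nd) ℝ)
    (C : Matrix (Fin nz) (Fin ny) ℝ) (R : Matrix (Fin nz) (Fin nz) ℝ)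
    (S : Matrix (Fin ny) (Fin ny) ℝ) : Matrix (Fin nd) (Fin nd) ℝ :=
  ((C * G)ᵀ * (Rt A Q C R S)⁻¹ * (C * G))⁻¹

theorem Matrix.PosDef.inv_sub_inv_posSemidef {n K : Type*} [Fintype n] [DecidableEq n] [Field K]
    [PartialOrder K] [StarRing K] [StarOrderedRing K] {A B : Matrix n n K} (hA : A.PosDef)
    (hB : B.PosDef) (hAB : (B - A).PosSemidef) : (A⁻¹ - B⁻¹).PosSemidef := by
  have := hA.isUnit.invertible
  have := hB.isUnit.invertible
  -- The two Schur complements of `[[B, 1], [1, A⁻¹]]` are `B - A` and `A⁻¹ - B⁻¹`.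
  have hblock : (fromBlocks B 1 (1 : Matrix n n K)ᴴ A⁻¹).PosSemidef := by
    rw [PosDef.fromBlocks₂₂ _ _ hA.inv]
    simpa using hAB
  simpa using (PosDef.fromBlocks₁₁ 1 A⁻¹ hB).mp hblock

theorem Matrix.PosSemidef.transpose_mul_mul_same {m n : Type*} [Fintype m] [Fintype n]
    {M : Matrix m m ℝ} (hM : M.PosSemidef) (B : Matrix m n ℝ) : (Bᵀ * M * B).PosSemidef := by
  simpa using hM.conjTranspose_mul_mul_same B

theorem Matrix.PosSemidef.mul_mul_transpose_same {m n : Type*} [Fintype m] [Fintype n]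
    {M : Matrix m m ℝ} (hM : M.PosSemidef) (B : Matrix n m ℝ) : (B * M * Bᵀ).PosSemidef := by
  simpa using hM.mul_mul_conjTranspose_same B

section Rt

variable {ny nz : ℕ} (A Q : Matrix (Fin ny) (Fin ny) ℝ) (C : Matrix (Fin nz) (Fin ny) ℝ)
  (R : Matrix (Fin nz) (Fin nz) ℝ)

theorem Rt_posDef (hQ : Q.PosSemidef) (hR : R.PosDef) {S : Matrix (Fin ny) (Fin ny) ℝ}
    (hS : S.PosSemidef) : (Rt A Q C R S).PosDef :=
  PosDef.posSemidef_add (((hS.mul_mul_transpose_same A).add hQ).mul_mul_transpose_same C) hR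

theorem Rt_add_sub_Rt (S T : Matrix (Fin ny) (Fin ny) ℝ) :
    Rt A Q C R (S + T) - Rt A Q C R S = C * (A * T * Aᵀ) * Cᵀ := by
  simp only [Rt, Matrix.mul_add, Matrix.add_mul]
  abel

end Rt

/-- for `α ∈ [0,1]`, PSD `Σ₁, Σ₂` and `χ = αΣ₁ + (1−α)Σ₂`,
`Fᵀ R̃(χ)⁻¹ F ⪯ Fᵀ R̃(αΣ₁)⁻¹ F + Fᵀ R̃((1−α)Σ₂)⁻¹ F` where `F = C·G`. -/
theorem info_matrix_split_bound {ny nz nd : ℕ}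
    (A Q : Matrix (Fin ny) (Fin ny) ℝ) (G : Matrix (Fin ny) (Fin nd) ℝ)
    (C : Matrix (Fin nz) (Fin ny) ℝ) (R : Matrix (Fin nz) (Fin nz) ℝ)
    (hQ : Q.PosDef) (hR : R.PosDef)
    (α : ℝ) (hα0 : 0 ≤ α) (hα1 : α ≤ 1)
    (S1 S2 : Matrix (Fin ny) (Fin ny) ℝ)
    (h1 : S1.PosSemidef) (h2 : S2.PosSemidef) :
    ((C * G)ᵀ * (Rt A Q C R (α • S1))⁻¹ * (C * G)
      + (C * G)ᵀ * (Rt A Q C R ((1 - α) • S2))⁻¹ * (C * G)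
      - (C * G)ᵀ * (Rt A Q C R (α • S1 + (1 - α) • S2))⁻¹ * (C * G)).PosSemidef := by
  have hS1 : (α • S1).PosSemidef := h1.smul hα0
  have hS2 : ((1 - α) • S2).PosSemidef := h2.smul (sub_nonneg.mpr hα1)
  set F := C * G
  set R1 := Rt A Q C R (α • S1)
  set R2 := Rt A Q C R ((1 - α) • S2)
  set Rχ := Rt A Q C R (α • S1 + (1 - α) • S2)
  have hR1 : R1.PosDef := Rt_posDef A Q C R hQ.posSemidef hR hS1
  have hRχ : Rχ.PosDef := Rt_posDef A Q C R hQ.posSemidef hR (hS1.add hS2)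
  have hR1χ : (Rχ - R1).PosSemidef := by
    rw [Rt_add_sub_Rt]
    exact (hS2.mul_mul_transpose_same A).mul_mul_transpose_same C
  have hsplit : Fᵀ * R1⁻¹ * F + Fᵀ * R2⁻¹ * F - Fᵀ * Rχ⁻¹ * F
      = Fᵀ * (R1⁻¹ - Rχ⁻¹) * F + Fᵀ * R2⁻¹ * F := by
    simp only [Matrix.mul_sub, Matrix.sub_mul]
    abel
  rw [hsplit]
  exact ((hR1.inv_sub_inv_posSemidef hRχ hR1χ).transpose_mul_mul_same F).add
    ((Rt_posDef A Q C R hQ.posSemidef hR hS2).inv.posSemidef.transpose_mul_mul_same F)
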